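/- arXiv:1602.02374 — 8 statements merged into one kernel-verified Lean document; each statement's English description precedes it below -/
import Mathlib

section
/- If B is a Bernstein set in the real line and U is a nonempty open subset of B (in the subspace topology), then there exists a continuous function f : B → ℝ such that f(U) = ℝ (in particular f(U) contains a closed interval). -/
/-!
Choose `b ∉ B` close to a point of `U` and points `tₙ ∉ B` increasing to `b`, all in the open
set cutting out `U`. On the gap `(tₙ, tₙ₊₁)` a continuous function, obtained by Tietze extension
from a Cantor set, takes every value of `[-n, n]` on an uncountable closed set, and such a set
meets `B`. Gluing these functions, and `0` outside `(t₀, b)`, gives a function that is continuous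
away from the `tₙ` and `b`, hence on `B`.
-/

open Set Filter Topology

/-- `B` is a Bernstein set: no uncountable closed subset of `ℝ` is contained in `B`
or in its complement. -/
def IsBernstein (B : Set ℝ) : Prop :=
  ∀ C : Set ℝ, IsClosed C → ¬ C.Countable → ¬ (C ⊆ B) ∧ ¬ (C ⊆ Bᶜ)

namespace IsBernstein

variable {B : Set ℝ}

theorem compl (hB : IsBernstein B) : IsBernstein Bᶜ := fun C hC hCc => by
  simpa only [compl_compl] using (hB C hC hCc).symm

theorem inter_nonempty (hB : IsBernstein B) {C : Set ℝ} (hC : IsClosed C)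
    (hCc : ¬ C.Countable) : (C ∩ B).Nonempty := by
  simpa only [compl_compl] using inter_compl_nonempty_iff.mpr (hB C hC hCc).2

theorem dense (hB : IsBernstein B) : Dense B := by
  refine dense_of_exists_between fun a b hab => ?_
  obtain ⟨a', ha, hab'⟩ := exists_between hab
  obtain ⟨b', hab'', hb⟩ := exists_between hab'
  obtain ⟨x, hx, hxB⟩ := hB.inter_nonempty isClosed_Icc (by simpa using hab'')
  exact ⟨x, hxB, Icc_subset_Ioo ha hb hx⟩

end IsBernstein

-- Project a surjection onto `Y × [0, 1]`: the fibre over `y` covers `{y} × [0, 1]`.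
theorem exists_nat_bool_continuous_uncountable_fibers_of_compact (Y : Type*) [Nonempty Y]
    [MetricSpace Y] [CompactSpace Y] :
    ∃ φ : (ℕ → Bool) → Y, Continuous φ ∧ ∀ y, ¬ (φ ⁻¹' {y}).Countable := by
  obtain ⟨s, hs, hsurj⟩ := exists_nat_bool_continuous_surjective_of_compact (Y × unitInterval)
  refine ⟨Prod.fst ∘ s, continuous_fst.comp hs, fun y hy => ?_⟩
  have hmaps : MapsTo (Prod.mk y) univ (s '' (Prod.fst ∘ s ⁻¹' {y})) := fun u _ => by
    obtain ⟨g, hg⟩ := hsurj (y, u)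
    exact ⟨g, by simp [hg], hg⟩
  have hI : (univ : Set unitInterval).Countable :=
    hmaps.countable_of_injOn (Prod.mk_right_injective y).injOn (hy.image s)
  rw [countable_univ_iff, unitInterval, countable_coe_iff] at hI
  norm_num at hI

theorem Real.exists_continuous_uncountable_closed_fibers {c d : ℝ} (hcd : c < d) {m M : ℝ}
    (hmM : m ≤ M) :
    ∃ F : ℝ → ℝ, Continuous F ∧
      ∀ y ∈ Icc m M, ∃ S ⊆ Ioo c d, IsClosed S ∧ ¬ S.Countable ∧ S ⊆ F ⁻¹' {y} := by
  obtain ⟨c', hc, hcd'⟩ := exists_between hcd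
  obtain ⟨d', hcd'', hd⟩ := exists_between hcd'
  have hunc : ¬ (Icc c' d').Countable := by simpa using hcd''
  obtain ⟨e, he, hec, hinj⟩ := isClosed_Icc.exists_nat_bool_injection_of_not_countable hunc
  have : Nonempty (Icc m M) := (nonempty_Icc.mpr hmM).to_subtype
  obtain ⟨φ, hφ, hfib⟩ := exists_nat_bool_continuous_uncountable_fibers_of_compact (Icc m M)
  have hemb : IsClosedEmbedding e := hec.isClosedEmbedding hinj
  obtain ⟨F, hF⟩ := ContinuousMap.exists_extension' hemb ⟨_, continuous_subtype_val.comp hφ⟩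
  refine ⟨F, F.continuous, fun y hy => ⟨e '' (φ ⁻¹' {⟨y, hy⟩}), ?_, ?_, ?_, ?_⟩⟩
  · exact (image_subset_range _ _).trans (he.trans (Icc_subset_Ioo hc hd))
  · exact hemb.isClosedMap _ (isClosed_singleton.preimage hφ)
  · exact fun h => hfib _ (countable_of_injective_of_countable_image hinj.injOn h)
  · rintro _ ⟨g, hg, rfl⟩
    have hφg : φ g = ⟨y, hy⟩ := hg
    simpa [hφg] using congrFun hF g

theorem exists_mem_Ico_of_le_of_lt {α : Type*} [LinearOrder α] {t : ℕ → α} {x : α}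
    (h0 : t 0 ≤ x) : ∀ {N : ℕ}, x < t N → ∃ n, x ∈ Ico (t n) (t (n + 1))
  | 0, hN => absurd h0 hN.not_ge
  | N + 1, hN => (lt_or_ge x (t N)).elim (exists_mem_Ico_of_le_of_lt h0) fun h => ⟨N, h, hN⟩

noncomputable def piecewiseIoo (t : ℕ → ℝ) (F : ℕ → ℝ → ℝ) (x : ℝ) : ℝ :=
  ∑' n, (Ioo (t n) (t (n + 1))).indicator (F n) x

section piecewiseIoo

variable {t : ℕ → ℝ} {F : ℕ → ℝ → ℝ} {b : ℝ}

theorem piecewiseIoo_eqOn (ht : Monotone t) (n : ℕ) :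
    EqOn (piecewiseIoo t F) (F n) (Ioo (t n) (t (n + 1))) := fun x hx => by
  refine (tsum_eq_single n fun m hm => indicator_of_notMem (fun hxm => ?_) _).trans
    (indicator_of_mem hx _)
  exact (ht.pairwise_disjoint_on_Ioo_succ hm).le_bot ⟨by simpa using hxm, by simpa using hx⟩

theorem piecewiseIoo_eqOn_zero (ht : Monotone t) (htb : ∀ n, t n ≤ b) :
    EqOn (piecewiseIoo t F) 0 (Iio (t 0) ∪ Ioi b) := fun _ hx =>
  (tsum_congr fun n => indicator_of_notMem (fun hxn => hx.elim
    (fun h => (h.trans_le (ht n.zero_le)).not_gt hxn.1)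
    (fun h => ((htb (n + 1)).trans_lt h).not_gt hxn.2)) _).trans tsum_zero

theorem continuousAt_piecewiseIoo (ht : StrictMono t) (htb : Tendsto t atTop (𝓝 b))
    (hF : ∀ n, Continuous (F n)) {x : ℝ} (hxt : x ∉ range t) (hxb : x ≠ b) :
    ContinuousAt (piecewiseIoo t F) x := by
  by_cases hx : x ∈ Iio (t 0) ∪ Ioi b
  · exact continuousAt_const.congr_of_eventuallyEq <|
      (piecewiseIoo_eqOn_zero ht.monotone (ht.monotone.ge_of_tendsto htb)).eventuallyEq_of_mem
        ((isOpen_Iio.union isOpen_Ioi).mem_nhds hx)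
  simp only [mem_union, mem_Iio, mem_Ioi, not_or, not_lt] at hx
  obtain ⟨N, hN⟩ := (htb.eventually (eventually_gt_nhds (hx.2.lt_of_ne hxb))).exists
  obtain ⟨n, hn, hn'⟩ := exists_mem_Ico_of_le_of_lt hx.1 hN
  have hxn : x ∈ Ioo (t n) (t (n + 1)) := ⟨hn.lt_of_ne fun h => hxt ⟨n, h⟩, hn'⟩
  exact (hF n).continuousAt.congr_of_eventuallyEq <|
    (piecewiseIoo_eqOn ht.monotone n).eventuallyEq_of_mem (isOpen_Ioo.mem_nhds hxn)

theorem continuousOn_piecewiseIoo (ht : StrictMono t) (htb : Tendsto t atTop (𝓝 b))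
    (hF : ∀ n, Continuous (F n)) {s : Set ℝ} (hts : ∀ n, t n ∉ s) (hbs : b ∉ s) :
    ContinuousOn (piecewiseIoo t F) s :=
  continuousOn_of_forall_continuousAt fun _ hx =>
    continuousAt_piecewiseIoo ht htb hF (fun ⟨n, hn⟩ => hts n (hn ▸ hx)) fun h => hbs (h ▸ hx)

end piecewiseIoo

/-- If `B` is a Bernstein set and `U` is a nonempty open subset of `B` (subspace topology),
then there is a continuous `f : B → ℝ` with `f(U) = ℝ`. -/
theorem bernstein_open_image_univ (B : Set ℝ) (hB : IsBernstein B)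
    (U : Set ↥B) (hU : IsOpen U) (hUne : U.Nonempty) :
    ∃ f : ↥B → ℝ, Continuous f ∧ f '' U = Set.univ := by
  obtain ⟨V, hV, rfl⟩ := isOpen_induced_iff.mp hU
  obtain ⟨⟨x₀, _⟩, hx₀⟩ := hUne
  obtain ⟨ε, hε, hball⟩ := Metric.isOpen_iff.mp hV x₀ hx₀
  obtain ⟨b, hbB, hxb, hbε⟩ := hB.compl.dense.exists_between (lt_add_of_pos_right x₀ hε)
  obtain ⟨t, ht, htB, htb⟩ := hB.compl.dense.exists_seq_strictMono_tendsto_of_lt hxb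
  have htV : ∀ n, Ioo (t n) (t (n + 1)) ⊆ V := fun n x hx => hball <| by
    rw [Metric.mem_ball, Real.dist_eq, abs_lt]
    constructor <;> linarith [hx.1, hx.2, (htB n).1.1, (htB (n + 1)).1.2]
  choose F hF hFy using fun n : ℕ => Real.exists_continuous_uncountable_closed_fibers
    (ht n.lt_succ_self) (neg_le_self (n.cast_nonneg : (0 : ℝ) ≤ n))
  refine ⟨B.domRestrict (piecewiseIoo t F),
    (continuousOn_piecewiseIoo ht htb hF (fun n => (htB n).2) hbB).domRestrict,
    eq_univ_of_forall fun y => ?_⟩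
  obtain ⟨n, hn⟩ := exists_nat_ge |y|
  obtain ⟨S, hSI, hS, hSc, hSy⟩ := hFy n y (abs_le.mp hn)
  obtain ⟨p, hpS, hpB⟩ := hB.inter_nonempty hS hSc
  exact ⟨⟨p, hpB⟩, htV n (hSI hpS),
    (piecewiseIoo_eqOn ht.monotone n (hSI hpS)).trans (hSy hpS)⟩
end

section
/- If the space C_h(X) of continuous real-valued functions on a Tychonoff space X with the open-point topology is separable, then every nonempty open subset of X has cardinality at least the continuum. -/
open Set

/-- The open-point topology on `C(X, ℝ)`, with subbasic open sets
`[U,r]⁻ = {f : f⁻¹(r) ∩ U ≠ ∅}` for `U` open in `X` and `r : ℝ`. -/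
def openPointTopology (X : Type*) [TopologicalSpace X] : TopologicalSpace C(X, ℝ) :=
  TopologicalSpace.generateFrom
    { S | ∃ (U : Set X) (r : ℝ), IsOpen U ∧ S = { f : C(X, ℝ) | ∃ x ∈ U, f x = r } }

/-- If `C_h(X)` is separable for a Tychonoff space `X`, then every nonempty open subset
of `X` has cardinality at least the continuum. -/
theorem openPoint_separable_dispersion (X : Type*) [TopologicalSpace X] [T35Space X]
    (hsep : @TopologicalSpace.SeparableSpace C(X, ℝ) (openPointTopology X)) :
    ∀ U : Set X, IsOpen U → U.Nonempty → Cardinal.continuum ≤ Cardinal.mk ↥U := by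
  intro U hU hUne
  letI := openPointTopology X
  obtain ⟨D, hDc, hDd⟩ := hsep.exists_countable_dense
  obtain ⟨x0, hx0⟩ := hUne
  have key : ∀ r : ℝ, ∃ f ∈ D, ∃ x ∈ U, (f : C(X, ℝ)) x = r := by
    intro r
    have hopen : IsOpen {f : C(X, ℝ) | ∃ x ∈ U, f x = r} :=
      TopologicalSpace.GenerateOpen.basic _ ⟨U, r, hU, rfl⟩
    have hne : {f : C(X, ℝ) | ∃ x ∈ U, f x = r}.Nonempty :=
      ⟨ContinuousMap.const X r, x0, hx0, rfl⟩
    obtain ⟨f, hf1, hf2⟩ := hDd.inter_open_nonempty _ hopen hne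
    exact ⟨f, hf2, hf1⟩
  choose f hfD x hxU hfx using key
  have hinj : Function.Injective (fun r : ℝ => ((⟨f r, hfD r⟩ : D), (⟨x r, hxU r⟩ : U))) := by
    intro r s h
    have h1 : f r = f s := congrArg (fun p => (p.1 : C(X, ℝ))) h
    have h2 : x r = x s := congrArg (fun p => (p.2 : X)) h
    rw [← hfx r, ← hfx s, h1, h2]
  have hle : Cardinal.continuum ≤ Cardinal.mk D * Cardinal.mk U := by
    have := Cardinal.lift_mk_le'.mpr ⟨⟨_, hinj⟩⟩
    rw [Cardinal.mk_real, Cardinal.lift_continuum, Cardinal.mk_prod] at this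
    simpa using this
  haveI : Countable D := hDc.to_subtype
  have hD : Cardinal.mk D ≤ Cardinal.aleph0 := Cardinal.mk_le_aleph0
  have h2 : Cardinal.continuum ≤ max (max Cardinal.aleph0 (Cardinal.mk U)) Cardinal.aleph0 :=
    hle.trans ((mul_le_mul_left hD _).trans (Cardinal.mul_le_max _ _))
  have h3 : Cardinal.continuum ≤ max Cardinal.aleph0 (Cardinal.mk U) := by
    simpa [max_assoc, max_comm, max_left_comm] using h2
  rcases le_max_iff.mp h3 with h | h
  · exact absurd h (not_le.mpr Cardinal.aleph0_lt_continuum)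
  · exact h
end

section
/- If C_h(X) is separable, then no point of X is a P-point of X. -/
open Set Topology

/-- There is a real number avoiding, for each `n`, the closed ball of radius `(1/2)^(n+3)`
around `c n`. -/
lemma exists_avoid (c : ℕ → ℝ) : ∃ r : ℝ, ∀ n, ¬ |r - c n| ≤ (1/2:ℝ)^(n+3) := by
  by_contra h
  push_neg at h
  have hsub : Set.Icc (0:ℝ) 1 ⊆ ⋃ n, Metric.closedBall (c n) ((1/2)^(n+3)) := by
    intro r _
    obtain ⟨n, hn⟩ := h r
    exact Set.mem_iUnion.2 ⟨n, by simpa [Metric.mem_closedBall, Real.dist_eq] using hn⟩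
  have h1 : (MeasureTheory.volume (Set.Icc (0:ℝ) 1)) = 1 := by
    simp [Real.volume_Icc]
  have h2 := MeasureTheory.measure_mono (μ := MeasureTheory.volume) hsub
  have h3 : MeasureTheory.volume (⋃ n, Metric.closedBall (c n) ((1/2:ℝ)^(n+3)))
      ≤ ∑' n : ℕ, MeasureTheory.volume (Metric.closedBall (c n) ((1/2:ℝ)^(n+3))) :=
    MeasureTheory.measure_iUnion_le _
  have h4 : ∑' n : ℕ, MeasureTheory.volume (Metric.closedBall (c n) ((1/2:ℝ)^(n+3)))
      = ENNReal.ofReal (1/2) := by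
    have he : ∀ n : ℕ, MeasureTheory.volume (Metric.closedBall (c n) ((1/2:ℝ)^(n+3)))
        = ENNReal.ofReal (2 * (1/2)^(n+3)) := fun n => Real.volume_closedBall _ _
    rw [tsum_congr he]
    rw [← ENNReal.ofReal_tsum_of_nonneg (fun n => by positivity)]
    · congr 1
      have he2 : ∀ n : ℕ, 2 * (1/2:ℝ)^(n+3) = (1/4) * (1/2)^n := fun n => by ring
      rw [tsum_congr he2, tsum_mul_left, tsum_geometric_of_lt_one (by norm_num) (by norm_num)]
      norm_num
    · have hs : Summable (fun n : ℕ => (1/4:ℝ) * (1/2)^n) :=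
        (summable_geometric_of_lt_one (by norm_num) (by norm_num)).mul_left _
      exact hs.congr (fun n => by ring)
  have hle : (1 : ENNReal) ≤ ENNReal.ofReal (1/2) := by
    rw [← h1, ← h4]; exact h2.trans h3
  have hlt : ENNReal.ofReal (1/2) < 1 := by
    rw [ENNReal.ofReal_lt_one]; norm_num
  exact absurd hle (not_le.2 hlt)

/-- If `C_h(X)` is separable then no point of `X` is a P-point, i.e. for every `x` the
family of neighborhoods of `x` is not closed under countable intersections. -/
theorem openPoint_separable_no_Ppoint (X : Type*) [TopologicalSpace X] [T35Space X]
    (hsep : @TopologicalSpace.SeparableSpace C(X, ℝ) (openPointTopology X)) :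
    ∀ x : X, ¬ (∀ N : ℕ → Set X, (∀ n, N n ∈ 𝓝 x) → (⋂ n, N n) ∈ 𝓝 x) := by
  intro x hP
  letI : TopologicalSpace C(X, ℝ) := openPointTopology X
  obtain ⟨s, hsc, hsd⟩ :=
    @TopologicalSpace.exists_countable_dense C(X, ℝ) (openPointTopology X) hsep
  have hne : s.Nonempty := by
    have hni : Nonempty C(X, ℝ) := ⟨ContinuousMap.const X 0⟩
    exact hsd.nonempty
  obtain ⟨f, hf⟩ := Set.Countable.exists_eq_range hsc hne
  -- neighborhoods around `x` on which `f n` stays close to `f n x`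
  set N : ℕ → Set X := fun n => (f n) ⁻¹' (Metric.ball (f n x) ((1/2)^(n+3))) with hN
  have hNnhd : ∀ n, N n ∈ 𝓝 x := by
    intro n
    exact (f n).continuous.continuousAt.preimage_mem_nhds
      (Metric.ball_mem_nhds _ (by positivity))
  have hW : (⋂ n, N n) ∈ 𝓝 x := hP N hNnhd
  set U : Set X := interior (⋂ n, N n) with hU
  have hUopen : IsOpen U := isOpen_interior
  have hxU : x ∈ U := mem_interior_iff_mem_nhds.2 hW
  obtain ⟨r, hr⟩ := exists_avoid (fun n => f n x)
  -- the subbasic open set `[U, r]⁻`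
  set S : Set C(X, ℝ) := { g : C(X, ℝ) | ∃ y ∈ U, g y = r } with hS
  have hSopen : @IsOpen C(X, ℝ) (openPointTopology X) S :=
    TopologicalSpace.GenerateOpen.basic S ⟨U, r, hUopen, rfl⟩
  have hSne : S.Nonempty := ⟨ContinuousMap.const X r, x, hxU, rfl⟩
  obtain ⟨g, hgS, hgs⟩ := hsd.inter_open_nonempty S hSopen hSne
  rw [hf] at hgs
  obtain ⟨n, rfl⟩ := hgs
  obtain ⟨y, hyU, hyr⟩ := hgS
  have hyN : y ∈ N n := Set.mem_iInter.1 (interior_subset hyU) n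
  have hd : dist (f n y) (f n x) < (1/2:ℝ)^(n+3) := hyN
  rw [hyr] at hd
  exact hr n (le_of_lt (by simpa [Real.dist_eq] using hd))
end

section
/- If C_h(X) is separable for a Tychonoff space X, then X has a π-network consisting of I-sets, i.e. for every nonempty open set U ⊆ X there exists a continuous function f : X → ℝ such that f(U) contains a nontrivial closed interval [a,b]. -/
/-!
Suppose a nonempty open `U` is not an I-set. Then no `f '' U` is an I-set, and a countable union
of non-I-sets cannot cover a Cantor set in `ℝ`: removing them one by one leaves nested Cantor sets
with a common point `r`. Taking `f` along a dense sequence of `C_h(X)`, the nonempty open set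
`[U, r]⁻` misses that sequence.
-/

open Set Function

def cantorSpaceHomeomorphProd : (ℕ → Bool) ≃ₜ (ℕ → Bool) × (ℕ → Bool) :=
  (Homeomorph.piCongrLeft Equiv.natSumNatEquivNat).symm.trans
    Homeomorph.sumArrowHomeomorphProdArrow

def IsCantorSet {Y : Type*} [TopologicalSpace Y] (K : Set Y) : Prop :=
  ∃ e : (ℕ → Bool) → Y, Continuous e ∧ Injective e ∧ range e = K

def IsISet {X : Type*} [TopologicalSpace X] (A : Set X) : Prop :=
  ∃ (f : C(X, ℝ)) (a b : ℝ), a < b ∧ Icc a b ⊆ f '' A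

theorem IsISet.of_image {X Y : Type*} [TopologicalSpace X] [TopologicalSpace Y]
    {f : C(X, Y)} {A : Set X} (h : IsISet (f '' A)) : IsISet A := by
  obtain ⟨g, a, b, hab, hsub⟩ := h
  exact ⟨g.comp f, a, b, hab, by rwa [ContinuousMap.coe_comp, image_comp]⟩

theorem isCantorSet_cantorSet : IsCantorSet cantorSet :=
  ⟨(↑) ∘ cantorSetHomeomorphNatToBool.symm,
    continuous_subtype_val.comp cantorSetHomeomorphNatToBool.symm.continuous,
    Subtype.val_injective.comp cantorSetHomeomorphNatToBool.symm.injective,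
    by rw [range_comp, cantorSetHomeomorphNatToBool.symm.range_coe, image_univ,
      Subtype.range_coe]⟩

namespace IsCantorSet

variable {Y : Type*} [TopologicalSpace Y] {K : Set Y}

theorem isCompact (hK : IsCantorSet K) : IsCompact K := by
  obtain ⟨e, he, -, rfl⟩ := hK
  exact isCompact_range he

theorem nonempty (hK : IsCantorSet K) : K.Nonempty := by
  obtain ⟨e, -, -, rfl⟩ := hK
  exact range_nonempty e

/-- Split `K ≅ C × C` with `C = ℕ → Bool`, send the first factor onto `[0, 1]` and extend this to
`g : Y → ℝ` by Tietze. Some `t ∈ [0, 1]` is missed by `g '' A`, and the fibre of `t` contains a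
copy `{b} × C` of the Cantor set. -/
theorem exists_subset_disjoint [T2Space Y] [NormalSpace Y] (hK : IsCantorSet K) {A : Set Y}
    (hA : ¬ IsISet A) : ∃ K' ⊆ K, IsCantorSet K' ∧ Disjoint K' A := by
  obtain ⟨e, he, he_inj, rfl⟩ := hK
  let σ := cantorSpaceHomeomorphProd
  let p : C((ℕ → Bool), ℝ) :=
    ⟨fun x ↦ Real.fromBinary (σ x).1,
      continuous_subtype_val.comp <| Real.fromBinary_continuous.comp <|
        continuous_fst.comp σ.continuous⟩
  obtain ⟨g, hg⟩ := ContinuousMap.exists_extension (he.isClosedEmbedding he_inj) p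
  have hg_apply : ∀ x, g (e x) = Real.fromBinary (σ x).1 := fun x ↦ DFunLike.congr_fun hg x
  obtain ⟨t, ht, ht_not⟩ : ∃ t ∈ Icc (0 : ℝ) 1, t ∉ g '' A := by
    by_contra! h
    exact hA ⟨g, 0, 1, zero_lt_one, h⟩
  obtain ⟨b, hb⟩ := Real.fromBinary_surjective ⟨t, ht⟩
  refine ⟨range (e ∘ σ.symm ∘ Prod.mk b), range_comp_subset_range _ _,
    ⟨_, he.comp (σ.symm.continuous.comp (Continuous.prodMk_right b)),
      he_inj.comp (σ.symm.injective.comp (Prod.mk_right_injective b)), rfl⟩, ?_⟩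
  rw [disjoint_right]
  rintro y hyA ⟨τ, rfl⟩
  refine ht_not ⟨_, hyA, ?_⟩
  simp [hg_apply, hb]

theorem not_subset_iUnion [T2Space Y] [NormalSpace Y] (hK : IsCantorSet K) {A : ℕ → Set Y}
    (hA : ∀ n, ¬ IsISet (A n)) : ¬ K ⊆ ⋃ n, A n := by
  choose next hsub hcantor hdisj using
    fun (L : {L : Set Y // IsCantorSet L}) n ↦ L.2.exists_subset_disjoint (hA n)
  let L : ℕ → {L : Set Y // IsCantorSet L} :=
    fun n ↦ Nat.rec ⟨K, hK⟩ (fun n L ↦ ⟨next L n, hcantor L n⟩) n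
  obtain ⟨r, hr⟩ := IsCompact.nonempty_iInter_of_sequence_nonempty_isCompact_isClosed
    (fun n ↦ (L n).1) (fun n ↦ hsub (L n) n) (fun n ↦ (L n).2.nonempty) (L 0).2.isCompact
    (fun n ↦ (L n).2.isCompact.isClosed)
  rw [mem_iInter] at hr
  intro hKsub
  obtain ⟨n, hn⟩ := mem_iUnion.1 (hKsub (hr 0))
  exact disjoint_left.1 (hdisj (L n) n) (hr (n + 1)) hn

end IsCantorSet

theorem exists_seq_iUnion_image_eq_univ {X : Type*} [TopologicalSpace X]
    (hsep : @TopologicalSpace.SeparableSpace C(X, ℝ) (openPointTopology X)) :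
    ∃ u : ℕ → C(X, ℝ), ∀ U : Set X, IsOpen U → U.Nonempty → ⋃ n, u n '' U = univ := by
  let _ := openPointTopology X
  obtain ⟨u, hu⟩ := TopologicalSpace.exists_dense_seq C(X, ℝ)
  refine ⟨u, fun U hU ⟨x₀, hx₀⟩ ↦ eq_univ_of_forall fun r ↦ ?_⟩
  have hopen : IsOpen {f : C(X, ℝ) | ∃ x ∈ U, f x = r} := .basic _ ⟨U, r, hU, rfl⟩
  obtain ⟨n, x, hx, hxr⟩ := hu.exists_mem_open hopen ⟨.const X r, x₀, hx₀, rfl⟩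
  exact mem_iUnion.2 ⟨n, x, hx, hxr⟩

theorem openPoint_separable_pi_network_I_sets_general (X : Type*) [TopologicalSpace X]
    (hsep : @TopologicalSpace.SeparableSpace C(X, ℝ) (openPointTopology X)) :
    ∀ U : Set X, IsOpen U → U.Nonempty →
      ∃ (f : C(X, ℝ)) (a b : ℝ), a < b ∧ Set.Icc a b ⊆ f '' U := by
  obtain ⟨u, hu⟩ := exists_seq_iUnion_image_eq_univ hsep
  intro U hU hne
  by_contra hU_not_ISet
  exact isCantorSet_cantorSet.not_subset_iUnion (fun n h ↦ hU_not_ISet h.of_image)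
    (hu U hU hne ▸ subset_univ _)

/-- If `C_h(X)` is separable for a Tychonoff space `X`, then every nonempty open subset
of `X` is an I-set: some continuous `f : X → ℝ` has `f(U)` containing a nontrivial
closed interval. Hence `X` has a π-network of I-sets. -/
theorem openPoint_separable_pi_network_I_sets (X : Type*) [TopologicalSpace X] [T35Space X]
    (hsep : @TopologicalSpace.SeparableSpace C(X, ℝ) (openPointTopology X)) :
    ∀ U : Set X, IsOpen U → U.Nonempty →
      ∃ (f : C(X, ℝ)) (a b : ℝ), a < b ∧ Set.Icc a b ⊆ f '' U :=
  openPoint_separable_pi_network_I_sets_general X hsep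
end

section
/- If C_h(X) is separable then C_h(βX) is separable, where βX is the Stone–Čech compactification of the Tychonoff space X. -/
open Set

section Aux

variable {X : Type*} [TopologicalSpace X]

private lemma opNegNatLe (m : ℕ) : (-(m : ℝ)) ≤ m := neg_le_self (by positivity)

/-- Clamp a continuous real function into `[-m, m]` and extend to the Stone–Čech
compactification. -/
noncomputable def opClampExt (e : C(X, ℝ)) (m : ℕ) : C(StoneCech X, ℝ) :=
  ⟨fun z => ((stoneCechExtend (g := fun x => projIcc (-(m : ℝ)) m (opNegNatLe m) (e x))
      (continuous_projIcc.comp e.continuous) z : Icc (-(m : ℝ)) m) : ℝ),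
   continuous_subtype_val.comp (continuous_stoneCechExtend _)⟩

lemma opClampExt_unit (e : C(X, ℝ)) (m : ℕ) (x : X) (hx : e x ∈ Icc (-(m : ℝ)) m) :
    opClampExt e m (stoneCechUnit x) = e x := by
  have h := congrFun (stoneCechExtend_extends
      (g := fun x => projIcc (-(m : ℝ)) m (opNegNatLe m) (e x))
      (continuous_projIcc.comp e.continuous)) x
  simp only [Function.comp_apply] at h
  simp only [opClampExt, ContinuousMap.coe_mk]
  rw [h, projIcc_of_mem _ hx]

/-- In a completely regular T1 space one can interpolate finitely many consistent values. -/
private lemma opExistsInterp [T35Space X] {ι : Type*} [Finite ι] (p : ι → X) (v : ι → ℝ)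
    (hcons : ∀ i j, p i = p j → v i = v j) :
    ∃ f : C(X, ℝ), ∀ i, f (p i) = v i := by
  have := Fintype.ofFinite ι
  classical
  set P : Finset X := Finset.image p Finset.univ with hP
  have hbump : ∀ q : X, ∃ φ : X → unitInterval, Continuous φ ∧
      (q ∈ P → (φ q = 0 ∧ Set.EqOn φ 1 ↑(P.erase q))) := by
    intro q
    by_cases hq : q ∈ P
    · obtain ⟨φ, hφc, hφ0, hφ1⟩ := CompletelyRegularSpace.completely_regular q
        (↑(P.erase q)) ((P.erase q).finite_toSet.isClosed) (by simp)
      exact ⟨φ, hφc, fun _ => ⟨hφ0, hφ1⟩⟩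
    · exact ⟨fun _ => 0, continuous_const, fun h => absurd h hq⟩
  choose φ hφc hφP using hbump
  set w : X → ℝ := fun q => if h : ∃ i, p i = q then v h.choose else 0 with hw
  refine ⟨⟨fun z => ∑ q ∈ P, w q * (1 - (φ q z : ℝ)), ?_⟩, ?_⟩
  · exact continuous_finset_sum _ fun q _ => continuous_const.mul
      (continuous_const.sub (continuous_subtype_val.comp (hφc q)))
  · intro i
    have hpiP : p i ∈ P := Finset.mem_image_of_mem p (Finset.mem_univ i)
    show (∑ q ∈ P, w q * (1 - (φ q (p i) : ℝ))) = v i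
    have hzero : ∀ q ∈ P, q ≠ p i → w q * (1 - (φ q (p i) : ℝ)) = 0 := by
      intro q hqP hqne
      have hmem : p i ∈ (↑(P.erase q) : Set X) :=
        Finset.mem_coe.2 (Finset.mem_erase.2 ⟨fun h => hqne h.symm, hpiP⟩)
      have h1 : (φ q (p i) : ℝ) = 1 := by rw [(hφP q hqP).2 hmem]; norm_num
      rw [h1]; ring
    rw [Finset.sum_eq_single_of_mem (p i) hpiP hzero]
    have h0 : (φ (p i) (p i) : ℝ) = 0 := by rw [(hφP (p i) hpiP).1]; norm_num
    have hw1 : w (p i) = v i := by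
      rw [hw]; dsimp only
      rw [dif_pos (⟨i, rfl⟩ : ∃ j, p j = p i)]
      exact hcons _ _ (⟨i, rfl⟩ : ∃ j, p j = p i).choose_spec
    rw [h0, hw1]; ring

end Aux

/-- If `C_h(X)` is separable, then `C_h(βX)` is separable, where `βX` is the
Stone–Čech compactification of the Tychonoff space `X`. -/
theorem openPoint_separable_stoneCech (X : Type*) [TopologicalSpace X] [T35Space X]
    (hsep : @TopologicalSpace.SeparableSpace C(X, ℝ) (openPointTopology X)) :
    @TopologicalSpace.SeparableSpace C(StoneCech X, ℝ) (openPointTopology (StoneCech X)) := by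
  classical
  letI tX : TopologicalSpace C(X, ℝ) := openPointTopology X
  haveI := hsep
  letI tB : TopologicalSpace C(StoneCech X, ℝ) := openPointTopology (StoneCech X)
  obtain ⟨D, hDc, hDd⟩ := TopologicalSpace.exists_countable_dense C(X, ℝ)
  set E : Set C(StoneCech X, ℝ) :=
    (fun pr : C(X, ℝ) × ℕ => opClampExt pr.1 pr.2) '' (D ×ˢ (univ : Set ℕ)) with hE
  refine ⟨⟨E, (hDc.prod countable_univ).image _, ?_⟩⟩
  have hbasis := TopologicalSpace.isTopologicalBasis_of_subbasis
    (t := tB) (s := { S | ∃ (U : Set (StoneCech X)) (r : ℝ), IsOpen U ∧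
      S = { f : C(StoneCech X, ℝ) | ∃ x ∈ U, f x = r } }) rfl
  rw [hbasis.dense_iff]
  rintro o ⟨F, ⟨hFfin, hFsub⟩, rfl⟩ hone
  obtain ⟨g, hg⟩ := hone
  haveI : Finite ↥F := hFfin.to_subtype
  -- extract the data of each subbasic set
  have hdata : ∀ S : F, ∃ (U : Set (StoneCech X)) (r : ℝ) (y : StoneCech X),
      IsOpen U ∧ (S : Set C(StoneCech X, ℝ)) = { f : C(StoneCech X, ℝ) | ∃ x ∈ U, f x = r } ∧
      y ∈ U ∧ g y = r := by
    rintro ⟨S, hS⟩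
    obtain ⟨U, r, hU, hSeq⟩ := hFsub hS
    have hgS : g ∈ S := hg S hS
    rw [hSeq] at hgS
    obtain ⟨y, hyU, hgy⟩ := hgS
    exact ⟨U, r, y, hU, hSeq, hyU, hgy⟩
  choose U r y hU hSeq hyU hgy using hdata
  -- separate the (possibly equal) points `y i` by open sets
  have sep : ∀ i j : F, ∃ A B : Set (StoneCech X),
      IsOpen A ∧ IsOpen B ∧ y i ∈ A ∧ y j ∈ B ∧ (y i ≠ y j → Disjoint A B) := by
    intro i j
    by_cases h : y i = y j
    · exact ⟨univ, univ, isOpen_univ, isOpen_univ, mem_univ _, mem_univ _,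
        fun hn => absurd h hn⟩
    · obtain ⟨A, B, hA, hB, hiA, hjB, hd⟩ := t2_separation h
      exact ⟨A, B, hA, hB, hiA, hjB, fun _ => hd⟩
  choose A B hAo hBo hyA hyB hdisj using sep
  set O : F → Set (StoneCech X) := fun i => U i ∩ ⋂ j, (A i j ∩ B j i) with hO
  have hOU : ∀ i, O i ⊆ U i := fun i => inter_subset_left
  have hOopen : ∀ i, IsOpen (O i) := fun i =>
    (hU i).inter (isOpen_iInter_of_finite fun j => (hAo i j).inter (hBo j i))
  have hyO : ∀ i, y i ∈ O i := fun i =>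
    ⟨hyU i, mem_iInter.2 fun j => ⟨hyA i j, hyB j i⟩⟩
  have hOdis : ∀ i j, y i ≠ y j → Disjoint (O i) (O j) := by
    intro i j hne
    exact (hdisj i j hne).mono (fun z hz => (mem_iInter.1 hz.2 j).1)
      (fun z hz => (mem_iInter.1 hz.2 i).2)
  -- pick points of `X` mapping into each `O i`
  have hx : ∀ i : F, ∃ xi : X, stoneCechUnit xi ∈ O i := by
    intro i
    obtain ⟨a, ha⟩ := denseRange_stoneCechUnit.exists_mem_open (hOopen i) ⟨y i, hyO i⟩
    exact ⟨a, ha⟩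
  choose x hxO using hx
  have hcons : ∀ i j : F, x i = x j → g (y i) = g (y j) := by
    intro i j hij
    by_contra hne
    have hyne : y i ≠ y j := fun h => hne (by rw [h])
    have hmem : stoneCechUnit (x i) ∈ O j := by rw [hij]; exact hxO j
    exact (hOdis i j hyne).ne_of_mem (hxO i) hmem rfl
  -- interpolate the values `g (y i)` at the points `x i`
  obtain ⟨f, hf⟩ := opExistsInterp x (fun i => g (y i)) hcons
  -- the corresponding open set in `C_h(X)`
  set Q : Set C(X, ℝ) :=
    ⋂ i : F, { e : C(X, ℝ) | ∃ z ∈ stoneCechUnit ⁻¹' (O i), e z = g (y i) } with hQ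
  have hQopen : IsOpen Q := isOpen_iInter_of_finite fun i =>
    TopologicalSpace.isOpen_generateFrom_of_mem
      ⟨stoneCechUnit ⁻¹' (O i), g (y i), (hOopen i).preimage continuous_stoneCechUnit, rfl⟩
  have hfQ : f ∈ Q := mem_iInter.2 fun i => ⟨x i, hxO i, hf i⟩
  obtain ⟨e, heQ, heD⟩ := hDd.inter_open_nonempty Q hQopen ⟨f, hfQ⟩
  -- choose a bound
  obtain ⟨M, hM⟩ := Finite.exists_le (fun i : F => |g (y i)|)
  obtain ⟨m, hm⟩ := exists_nat_ge M
  refine ⟨opClampExt e m, ?_, ⟨(e, m), ⟨heD, mem_univ _⟩, rfl⟩⟩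
  intro S hS
  have hSeq' : S = { f : C(StoneCech X, ℝ) | ∃ x ∈ U ⟨S, hS⟩, f x = r ⟨S, hS⟩ } :=
    hSeq ⟨S, hS⟩
  rw [hSeq']
  obtain ⟨z, hz1, hz2⟩ := mem_iInter.1 heQ ⟨S, hS⟩
  refine ⟨stoneCechUnit z, hOU _ hz1, ?_⟩
  have hb : e z ∈ Icc (-(m : ℝ)) m := by
    rw [hz2]
    have := le_trans (hM ⟨S, hS⟩) hm
    exact abs_le.1 this
  rw [opClampExt_unit e m z hb, hz2, hgy]
end

section
/- If X is a subset of ℝ of cardinality continuum such that every subset of X of cardinality continuum admits a continuous surjection onto [0,1] (the hypothesis holding in the iterated perfect set model), and W is a subset of X whose closure in X is contained in an open set U with the closure of W (in X) of cardinality continuum, then there is a continuous F : X → ℝ with F(U) ⊇ [0,1]; in particular U is an I-set. -/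
open Set

/-- (Iterated perfect set model core.) Suppose `X ⊆ ℝ` has cardinality continuum and
every subset of `X` of cardinality continuum admits a continuous surjection onto
`[0,1]`. If `W, U ⊆ X` with `U` open, the closure of `W` in `X` contained in `U` and
of cardinality continuum, then some continuous `F : X → ℝ` has `F(U) ⊇ [0,1]`;
in particular `U` is an I-set. -/
theorem iterated_perfect_set_I_set (X : Set ℝ)
    (hX : Cardinal.mk ↥X = Cardinal.continuum)
    (hsurj : ∀ S : Set ↥X, Cardinal.mk ↥S = Cardinal.continuum →
      ∃ g : ↥S → ℝ, Continuous g ∧ Set.range g = Set.Icc 0 1)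
    (W U : Set ↥X) (hU : IsOpen U) (hWU : closure W ⊆ U)
    (hWc : Cardinal.mk ↥(closure W) = Cardinal.continuum) :
    ∃ F : ↥X → ℝ, Continuous F ∧ Set.Icc (0 : ℝ) 1 ⊆ F '' U := by
  obtain ⟨g, hgc, hgr⟩ := hsurj (closure W) hWc
  obtain ⟨F, hF⟩ := ContinuousMap.exists_restrict_eq (Y := ℝ)
    (isClosed_closure (s := W)) ⟨g, hgc⟩
  refine ⟨F, F.continuous, ?_⟩
  intro y hy
  rw [← hgr] at hy
  obtain ⟨x, hx⟩ := hy
  refine ⟨x, hWU x.2, ?_⟩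
  have := congrFun (congrArg ContinuousMap.toFun hF) x
  simpa [ContinuousMap.restrict, hx] using this
end

section
/- Let X be a topological space possessing a countable family G of continuous real-valued functions such that for every finite family U_1,…,U_n of pairwise disjoint nonempty open sets and reals r_1,…,r_n there exists g ∈ G with g⁻¹(r_j) ∩ U_j ≠ ∅ for each j. Then C_h(X) is separable. -/
open Set

/-!
A basic open set of `C_h(X)` containing `f` is cut out by conditions `f⁻¹(rᵢ) ∩ Uᵢ ≠ ∅`.
Shrinking `Uᵢ` to `Uᵢ ∩ f⁻¹(Oᵢ)`, with `Oᵢ` disjoint neighbourhoods of the distinct values `rᵢ`,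
makes sets with different prescribed values disjoint. Any finite family of nonempty open sets is
refined by a finite pairwise disjoint one; on each refining set the prescribed value is then
well defined, and the hypothesis on `G` yields `g ∈ G` in the basic open set.
-/

section

variable {X : Type*} [TopologicalSpace X]

theorem Set.Finite.exists_pairwiseDisjoint_refinement {𝒱 : Set (Set X)} (h𝒱 : 𝒱.Finite)
    (hV : ∀ V ∈ 𝒱, IsOpen V ∧ V.Nonempty) :
    ∃ 𝒲 : Set (Set X), 𝒲.Finite ∧ 𝒲.PairwiseDisjoint id ∧
      (∀ W ∈ 𝒲, IsOpen W ∧ W.Nonempty) ∧ ∀ V ∈ 𝒱, ∃ W ∈ 𝒲, W ⊆ V := by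
  induction 𝒱, h𝒱 using Set.Finite.induction_on with
  | empty => exact ⟨∅, finite_empty, pairwiseDisjoint_empty, by simp, by simp⟩
  | @insert V 𝒱 _ _ ih =>
    obtain ⟨hVo, hVne⟩ := hV V (mem_insert V 𝒱)
    obtain ⟨𝒲, h𝒲f, h𝒲d, h𝒲, h𝒲𝒱⟩ := ih fun V' hV' => hV V' (mem_insert_of_mem V hV')
    by_cases hmeet : ∃ W ∈ 𝒲, ¬Disjoint W V
    · obtain ⟨W, hW, hWV⟩ := hmeet
      refine ⟨insert (W ∩ V) (𝒲 \ {W}), h𝒲f.sdiff.insert _, ?_, ?_, ?_⟩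
      · refine (h𝒲d.subset sdiff_subset).insert fun W' hW' _ => ?_
        exact (h𝒲d hW hW'.1 (Ne.symm hW'.2)).mono_left inter_subset_left
      · refine forall_mem_insert.2 ⟨⟨(h𝒲 W hW).1.inter hVo, not_disjoint_iff_nonempty_inter.1 hWV⟩,
          fun W' hW' => h𝒲 W' hW'.1⟩
      · refine forall_mem_insert.2 ⟨⟨W ∩ V, mem_insert _ _, inter_subset_right⟩, fun V' hV' => ?_⟩
        obtain ⟨W', hW', hW'V'⟩ := h𝒲𝒱 V' hV'
        by_cases hW'W : W' = W
        · exact ⟨W ∩ V, mem_insert _ _, inter_subset_left.trans (hW'W ▸ hW'V')⟩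
        · exact ⟨W', mem_insert_of_mem _ ⟨hW', hW'W⟩, hW'V'⟩
    · push Not at hmeet
      refine ⟨insert V 𝒲, h𝒲f.insert V, h𝒲d.insert fun W hW _ => (hmeet W hW).symm,
        forall_mem_insert.2 ⟨⟨hVo, hVne⟩, h𝒲⟩, forall_mem_insert.2 ⟨⟨V, mem_insert V 𝒲, subset_rfl⟩,
          fun V' hV' => (h𝒲𝒱 V' hV').imp fun W hW => ⟨mem_insert_of_mem V hW.1, hW.2⟩⟩⟩

theorem exists_open_shrink_eq_of_meet {Y ι : Type*} [TopologicalSpace Y] [T2Space Y] [Finite ι]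
    {f : X → Y} (hf : Continuous f) {U : ι → Set X} (hU : ∀ i, IsOpen (U i)) {r : ι → Y}
    (hfr : ∀ i, ∃ x ∈ U i, f x = r i) :
    ∃ V : ι → Set X, (∀ i, IsOpen (V i) ∧ (V i).Nonempty) ∧ (∀ i, V i ⊆ U i) ∧
      ∀ i j, (V i ∩ V j).Nonempty → r i = r j := by
  obtain ⟨O, hO, hOd⟩ := (finite_range r).t2_separation
  refine ⟨fun i => U i ∩ f ⁻¹' O (r i), fun i => ⟨(hU i).inter ((hO _).2.preimage hf), ?_⟩,
    fun i => inter_subset_left, fun i j ⟨x, hxi, hxj⟩ => ?_⟩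
  · obtain ⟨x, hx, hfx⟩ := hfr i
    exact ⟨x, hx, by simpa [hfx] using (hO (r i)).1⟩
  · by_contra hij
    exact disjoint_left.1 (hOd (mem_range_self i) (mem_range_self j) hij) hxi.2 hxj.2

def RealizesValuesOnDisjointOpens (G : Set C(X, ℝ)) : Prop :=
  ∀ (n : ℕ) (U : Fin n → Set X) (r : Fin n → ℝ),
    (∀ j, IsOpen (U j)) → (∀ j, (U j).Nonempty) → Pairwise (Function.onFun Disjoint U) →
    ∃ g ∈ G, ∀ j, ∃ x ∈ U j, g x = r j

namespace RealizesValuesOnDisjointOpens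

variable {G : Set C(X, ℝ)}

theorem exists_of_pairwiseDisjoint (hG : RealizesValuesOnDisjointOpens G) {𝒲 : Set (Set X)}
    (h𝒲f : 𝒲.Finite) (h𝒲d : 𝒲.PairwiseDisjoint id) (h𝒲 : ∀ W ∈ 𝒲, IsOpen W ∧ W.Nonempty)
    (ρ : Set X → ℝ) : ∃ g ∈ G, ∀ W ∈ 𝒲, ∃ x ∈ W, g x = ρ W := by
  have := h𝒲f.to_subtype
  let e := Finite.equivFin 𝒲
  obtain ⟨g, hgG, hg⟩ := hG _ (fun k => e.symm k) (fun k => ρ (e.symm k))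
    (fun k => (h𝒲 _ (e.symm k).2).1) (fun k => (h𝒲 _ (e.symm k).2).2)
    fun k l hkl => h𝒲d (e.symm k).2 (e.symm l).2 (Subtype.coe_injective.ne (e.symm.injective.ne hkl))
  exact ⟨g, hgG, fun W hW => by simpa only [Equiv.symm_apply_apply] using hg (e ⟨W, hW⟩)⟩

theorem exists_of_compatible (hG : RealizesValuesOnDisjointOpens G) {ι : Type*} [Finite ι]
    {V : ι → Set X} (hV : ∀ i, IsOpen (V i) ∧ (V i).Nonempty) {r : ι → ℝ}
    (hr : ∀ i j, (V i ∩ V j).Nonempty → r i = r j) :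
    ∃ g ∈ G, ∀ i, ∃ x ∈ V i, g x = r i := by
  classical
  obtain ⟨𝒲, h𝒲f, h𝒲d, h𝒲, h𝒲V⟩ :=
    (finite_range V).exists_pairwiseDisjoint_refinement (forall_mem_range.2 hV)
  obtain ⟨g, hgG, hg⟩ := hG.exists_of_pairwiseDisjoint h𝒲f h𝒲d h𝒲
    fun W => if h : ∃ i, W ⊆ V i then r h.choose else 0
  refine ⟨g, hgG, fun i => ?_⟩
  obtain ⟨W, hW, hWV⟩ := h𝒲V (V i) (mem_range_self i)
  have hex : ∃ j, W ⊆ V j := ⟨i, hWV⟩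
  obtain ⟨x, hxW, hgx⟩ := hg W hW
  rw [dif_pos hex] at hgx
  -- `W` is nonempty, so it witnesses that `V i` meets the `V j` whose value was prescribed on `W`
  exact ⟨x, hWV hxW, hgx.trans (hr _ _ ⟨x, hex.choose_spec hxW, hWV hxW⟩)⟩

end RealizesValuesOnDisjointOpens

end

/-- If `X` admits a countable family `G` of continuous real-valued functions such that
for every finite family of pairwise disjoint nonempty open sets `U_1,…,U_n` and reals
`r_1,…,r_n` some `g ∈ G` satisfies `g⁻¹(r_j) ∩ U_j ≠ ∅` for all `j`, then `C_h(X)` is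
separable. -/
theorem dense_family_openPoint_separable (X : Type*) [TopologicalSpace X]
    (G : Set C(X, ℝ)) (hGc : G.Countable)
    (hG : ∀ (n : ℕ) (U : Fin n → Set X) (r : Fin n → ℝ),
      (∀ j, IsOpen (U j)) → (∀ j, (U j).Nonempty) → Pairwise (Function.onFun Disjoint U) →
      ∃ g ∈ G, ∀ j, ∃ x ∈ U j, g x = r j) :
    @TopologicalSpace.SeparableSpace C(X, ℝ) (openPointTopology X) := by
  let := openPointTopology X
  refine ⟨⟨G, hGc, (TopologicalSpace.isTopologicalBasis_of_subbasis rfl).dense_iff.2 ?_⟩⟩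
  rintro _ ⟨F, ⟨hFf, hFsub⟩, rfl⟩ ⟨f, hf⟩
  have := hFf.to_subtype
  choose U r hU hFeq using fun S : F => hFsub S.2
  obtain ⟨V, hV, hVU, hVr⟩ := exists_open_shrink_eq_of_meet (r := r) f.continuous hU
    fun S => by simpa only [hFeq S, mem_ofPred_eq] using hf S S.2
  obtain ⟨g, hgG, hg⟩ := RealizesValuesOnDisjointOpens.exists_of_compatible hG hV hVr
  refine ⟨g, fun S hS => ?_, hgG⟩
  obtain ⟨x, hx, hgx⟩ := hg ⟨S, hS⟩
  rw [show S = _ from hFeq ⟨S, hS⟩]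
  exact ⟨x, hVU _ hx, hgx⟩
end

section
/- If D ⊆ ℝ is countable and U ⊆ ℝ is a nonempty open interval, then U \ D is homeomorphic to the Baire space ω^ω, provided D is dense in ℝ. -/
/-!
Enumerate `D` as `f 0, f 1, …` and build a Cantor scheme of open intervals indexed by finite
sequences of integers: the interval at a node of depth `n` is cut into the gaps of a bi-infinite
increasing sequence of points of `D` accumulating at both of its ends, and `f n` is made one of
these cut points whenever it lies in the interval. Every point of `(a, b) \ D` then lies in exactly
one gap at each depth, while no point of `D` lies in all the intervals of a branch. The latter
also makes the intervals along a branch shrink to a point, since distinct limits of their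
endpoints would enclose a point of `D`. The branch map is therefore a homeomorphism from
`ℤ^ℕ ≃ ℕ^ℕ` onto `(a, b) \ D`.
-/

open Set Filter Topology PiNat

theorem Monotone.exists_mem_Ico_int {α : Type*} [LinearOrder α] {u : ℤ → α}
    (hu : Monotone u) {x : α} {j k : ℤ} (hj : u j ≤ x) (hk : x < u k) :
    ∃ i, x ∈ Ico (u i) (u (i + 1)) := by
  obtain ⟨i, hi, hmax⟩ := Int.exists_greatest_of_bdd (P := fun i => u i ≤ x)
    ⟨k, fun i hi => (hu.reflect_lt (hi.trans_lt hk)).le⟩ ⟨j, hj⟩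
  exact ⟨i, hi, not_le.1 fun h => (lt_add_one i).not_ge (hmax _ h)⟩

theorem Dense.tendsto_sub_of_nested {s : Set ℝ} (hs : Dense s) {l r : ℕ → ℝ}
    (hl : Monotone l) (hr : Antitone r) (hlr : ∀ n, l n ≤ r n)
    (hdisj : Disjoint (⋂ n, Ioo (l n) (r n)) s) : Tendsto (fun n => r n - l n) atTop (𝓝 0) := by
  have hle (m n : ℕ) : l m ≤ r n :=
    (hl (le_max_left m n)).trans ((hlr _).trans (hr (le_max_right m n)))
  have hl_bdd : BddAbove (range l) := ⟨r 0, forall_mem_range.2 fun m => hle m 0⟩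
  have hr_bdd : BddBelow (range r) := ⟨l 0, forall_mem_range.2 fun n => hle 0 n⟩
  have hsup_eq_inf : ⨆ n, l n = ⨅ n, r n := by
    refine le_antisymm (le_ciInf fun n => ciSup_le fun m => hle m n) (not_lt.1 fun h => ?_)
    obtain ⟨y, hy, hly, hyr⟩ := hs.exists_between h
    refine disjoint_left.1 hdisj (mem_iInter.2 fun n => ⟨?_, ?_⟩) hy
    · exact (le_ciSup hl_bdd n).trans_lt hly
    · exact hyr.trans_le (ciInf_le hr_bdd n)
  simpa [hsup_eq_inf] using (tendsto_atTop_ciInf hr hr_bdd).sub (tendsto_atTop_ciSup hl hl_bdd)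

namespace CantorScheme

variable {β α : Type*} {A : List β → Set α}

theorem res_eq_of_mem (hA : CantorScheme.Antitone A) (hdisj : CantorScheme.Disjoint A)
    {x x' : ℕ → β} {y : α} : ∀ {n : ℕ}, y ∈ A (res x n) → y ∈ A (res x' n) → res x n = res x' n
  | 0, _, _ => rfl
  | n + 1, hx, hx' => by
    simp only [res_succ] at hx hx' ⊢
    have hres := res_eq_of_mem hA hdisj (hA _ _ hx) (hA _ _ hx')
    rw [hres] at hx ⊢
    congr 1
    by_contra hne
    exact disjoint_left.1 (hdisj _ hne) hx hx'

theorem exists_forall_mem_res {S : Set α} (hcover : ∀ l, A l \ S ⊆ ⋃ b, A (b :: l)) {y : α}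
    (hy : y ∈ A [] \ S) : ∃ x : ℕ → β, ∀ n, y ∈ A (res x n) := by
  have hstep : ∀ l, y ∈ A l → ∃ b, y ∈ A (b :: l) := fun l hl =>
    mem_iUnion.1 (hcover l ⟨hl, hy.2⟩)
  have : Nonempty β := (hstep [] hy.1).nonempty
  choose! c hc using hstep
  let path : ℕ → List β := fun n => n.rec [] fun _ l => c l :: l
  have hres : ∀ n, res (fun n => c (path n)) n = path n := by
    intro n
    induction n with
    | zero => rfl
    | succ n ih => rw [res_succ, ih]
  refine ⟨fun n => c (path n), fun n => ?_⟩
  rw [hres]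
  induction n with
  | zero => exact hy.1
  | succ n ih => exact hc _ ih

variable [MetricSpace α] [CompleteSpace α] [TopologicalSpace β] [DiscreteTopology β]

theorem nonempty_homeomorph_diff {S : Set α} (hanti : ClosureAntitone A)
    (hdisj : CantorScheme.Disjoint A) (hdiam : VanishingDiam A) (hne : ∀ l, (A l).Nonempty)
    (hopen : ∀ l, IsOpen (A l)) (hcover : ∀ l, A l \ S ⊆ ⋃ b, A (b :: l))
    (hbranch : ∀ x : ℕ → β, Disjoint (⋂ n, A (res x n)) S) :
    Nonempty ((ℕ → β) ≃ₜ ↥(A [] \ S)) := by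
  have hdom := hanti.map_of_vanishingDiam hdiam hne
  let F : (ℕ → β) → α := fun x => (inducedMap A).2 ⟨x, hdom ▸ mem_univ x⟩
  have hF_mem (x : ℕ → β) (n : ℕ) : F x ∈ A (res x n) := map_mem _ n
  have hF_eq {x : ℕ → β} {y : α} (hy : ∀ n, y ∈ A (res x n)) : F x = y := by
    by_contra hxy
    obtain ⟨n, hn⟩ := hdiam.dist_lt _ (dist_pos.2 hxy) x
    exact lt_irrefl _ (hn _ (hF_mem x n) _ (hy n))
  let G : (ℕ → β) → ↥(A [] \ S) := fun x =>
    ⟨F x, hF_mem x 0, disjoint_left.1 (hbranch x) (mem_iInter.2 (hF_mem x))⟩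
  have hG_image (x : ℕ → β) (n : ℕ) : G '' cylinder x n = Subtype.val ⁻¹' A (res x n) := by
    ext ⟨y, hy⟩
    constructor
    · rintro ⟨x', hx', hx'y⟩
      rw [cylinder_eq_res, mem_ofPred_eq] at hx'
      rw [← hx'y, mem_preimage, ← hx']
      exact hF_mem x' n
    · intro hyn
      obtain ⟨x', hx'⟩ := exists_forall_mem_res hcover hy
      refine ⟨x', ?_, Subtype.ext (hF_eq hx')⟩
      rw [cylinder_eq_res]
      exact res_eq_of_mem hanti.antitone hdisj (hx' n) hyn
  have hG_bij : Function.Bijective G := by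
    refine ⟨fun x x' h => ?_, fun ⟨y, hy⟩ => ?_⟩
    · exact congrArg Subtype.val (hdisj.map_injective (congrArg Subtype.val h : F x = F x'))
    · obtain ⟨x, hx⟩ := exists_forall_mem_res hcover hy
      exact ⟨x, Subtype.ext (hF_eq hx)⟩
  have hG_cont : Continuous G :=
    (hdiam.map_continuous.comp (continuous_id.subtype_mk _)).subtype_mk _
  have hG_open : IsOpenMap G := by
    rw [(isTopologicalBasis_cylinders fun _ : ℕ => β).isOpenMap_iff]
    rintro _ ⟨x, n, rfl⟩
    rw [hG_image]
    exact (hopen _).preimage continuous_subtype_val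
  exact ⟨(Equiv.ofBijective G hG_bij).toHomeomorphOfContinuousOpen hG_cont hG_open⟩

end CantorScheme

namespace IntervalScheme

structure IsSubdivision (s : Set ℝ) (p q : ℝ) (u : ℤ → ℝ) : Prop where
  strictMono : StrictMono u
  mem : ∀ i, u i ∈ s
  mem_Ioo : ∀ i, u i ∈ Ioo p q
  exists_mem_Ico : ∀ x ∈ Ioo p q, ∃ i, x ∈ Ico (u i) (u (i + 1))

variable {s : Set ℝ} {p q m : ℝ}

theorem exists_isSubdivision (hs : Dense s) (hm : m ∈ s) (hpm : p < m) (hmq : m < q) :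
    ∃ u, IsSubdivision s p q u ∧ u 0 = m := by
  obtain ⟨v, hv_mono, hv_mem, hv_lim⟩ := hs.exists_seq_strictMono_tendsto_of_lt hmq
  obtain ⟨w, hw_anti, hw_mem, hw_lim⟩ := hs.exists_seq_strictAnti_tendsto_of_lt hpm
  let u : ℤ → ℝ
    | 0 => m
    | (n + 1 : ℕ) => v n
    | .negSucc n => w n
  have hu_mono : StrictMono u := by
    refine strictMono_int_of_lt_succ ?_
    rintro ((_ | n) | (_ | n))
    · exact (hv_mem 0).1.1
    · exact hv_mono n.lt_succ_self
    · exact (hw_mem 0).1.2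
    · exact hw_anti n.lt_succ_self
  have hu_mem : ∀ i, u i ∈ s ∩ Ioo p q := by
    rintro ((_ | n) | n)
    · exact ⟨hm, hpm, hmq⟩
    · exact ⟨(hv_mem n).2, hpm.trans (hv_mem n).1.1, (hv_mem n).1.2⟩
    · exact ⟨(hw_mem n).2, (hw_mem n).1.1, (hw_mem n).1.2.trans hmq⟩
  refine ⟨u, ⟨hu_mono, fun i => (hu_mem i).1, fun i => (hu_mem i).2, fun x hx => ?_⟩, rfl⟩
  obtain ⟨k, hk⟩ := (hv_lim.eventually (lt_mem_nhds hx.2)).exists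
  obtain ⟨j, hj⟩ := (hw_lim.eventually (gt_mem_nhds hx.1)).exists
  exact hu_mono.monotone.exists_mem_Ico_int (j := .negSucc j) (k := (k + 1 : ℕ)) hj.le hk

noncomputable def subdivision (s : Set ℝ) (e p q : ℝ) : ℤ → ℝ :=
  Classical.epsilon fun u => IsSubdivision s p q u ∧ (e ∈ s ∩ Ioo p q → u 0 = e)

theorem subdivision_spec (hs : Dense s) (hpq : p < q) (e : ℝ) :
    IsSubdivision s p q (subdivision s e p q) ∧
      (e ∈ s ∩ Ioo p q → subdivision s e p q 0 = e) := by
  refine Classical.epsilon_spec (p := fun u => IsSubdivision s p q u ∧ _) ?_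
  by_cases he : e ∈ s ∩ Ioo p q
  · obtain ⟨u, hu, hu0⟩ := exists_isSubdivision hs he.1 he.2.1 he.2.2
    exact ⟨u, hu, fun _ => hu0⟩
  · obtain ⟨m, hm, hpm, hmq⟩ := hs.exists_between hpq
    obtain ⟨u, hu, -⟩ := exists_isSubdivision hs hm hpm hmq
    exact ⟨u, hu, fun h => absurd h he⟩

theorem notMem_Ioo_subdivision (hs : Dense s) (hpq : p < q) {e : ℝ} (he : e ∈ s) (i : ℤ) :
    e ∉ Ioo (subdivision s e p q i) (subdivision s e p q (i + 1)) := by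
  obtain ⟨hu, hu0⟩ := subdivision_spec hs hpq e
  set u := subdivision s e p q
  intro hei
  by_cases hepq : e ∈ Ioo p q
  · rw [← hu0 ⟨he, hepq⟩] at hei
    have h₁ := hu.strictMono.lt_iff_lt.1 hei.1
    have h₂ := hu.strictMono.lt_iff_lt.1 hei.2
    omega
  · exact hepq ⟨(hu.mem_Ioo i).1.trans hei.1, hei.2.trans (hu.mem_Ioo (i + 1)).2⟩

noncomputable def ends (s : Set ℝ) (f : ℕ → ℝ) (a b : ℝ) : List ℤ → ℝ × ℝ
  | [] => (a, b)
  | i :: l =>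
    let u := subdivision s (f l.length) (ends s f a b l).1 (ends s f a b l).2
    (u i, u (i + 1))

noncomputable def cuts (s : Set ℝ) (f : ℕ → ℝ) (a b : ℝ) (l : List ℤ) : ℤ → ℝ :=
  subdivision s (f l.length) (ends s f a b l).1 (ends s f a b l).2

def scheme (s : Set ℝ) (f : ℕ → ℝ) (a b : ℝ) (l : List ℤ) : Set ℝ :=
  Ioo (ends s f a b l).1 (ends s f a b l).2

variable {f : ℕ → ℝ} {a b : ℝ}

theorem scheme_cons (i : ℤ) (l : List ℤ) :
    scheme s f a b (i :: l) = Ioo (cuts s f a b l i) (cuts s f a b l (i + 1)) := rfl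

theorem ends_fst_lt_snd (hs : Dense s) (hab : a < b) :
    ∀ l : List ℤ, (ends s f a b l).1 < (ends s f a b l).2
  | [] => hab
  | i :: l => (subdivision_spec hs (ends_fst_lt_snd hs hab l) _).1.strictMono (lt_add_one i)

theorem isSubdivision_cuts (hs : Dense s) (hab : a < b) (l : List ℤ) :
    IsSubdivision s (ends s f a b l).1 (ends s f a b l).2 (cuts s f a b l) :=
  (subdivision_spec hs (ends_fst_lt_snd hs hab l) _).1

theorem ends_cons_mem (hs : Dense s) (hab : a < b) (i : ℤ) (l : List ℤ) :
    (ends s f a b (i :: l)).1 ∈ scheme s f a b l ∧ (ends s f a b (i :: l)).2 ∈ scheme s f a b l :=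
  ⟨(isSubdivision_cuts hs hab l).mem_Ioo i, (isSubdivision_cuts hs hab l).mem_Ioo (i + 1)⟩

theorem closureAntitone_scheme (hs : Dense s) (hab : a < b) :
    CantorScheme.ClosureAntitone (scheme s f a b) := fun l i => by
  rw [scheme, closure_Ioo (ends_fst_lt_snd hs hab _).ne]
  exact Icc_subset_Ioo (ends_cons_mem hs hab i l).1.1 (ends_cons_mem hs hab i l).2.2

theorem disjoint_scheme (hs : Dense s) (hab : a < b) :
    CantorScheme.Disjoint (scheme s f a b) := fun l i j hij => by
  simpa only [scheme_cons, Order.succ_eq_add_one] using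
    (isSubdivision_cuts hs hab l).strictMono.monotone.pairwise_disjoint_on_Ioo_succ hij

theorem diff_subset_iUnion_scheme (hs : Dense s) (hab : a < b) (l : List ℤ) :
    scheme s f a b l \ s ⊆ ⋃ i, scheme s f a b (i :: l) := by
  rintro x ⟨hx, hxs⟩
  obtain ⟨i, hi, hi'⟩ := (isSubdivision_cuts hs hab l).exists_mem_Ico x hx
  refine mem_iUnion.2 ⟨i, lt_of_le_of_ne hi fun h => hxs ?_, hi'⟩
  exact h ▸ (isSubdivision_cuts hs hab l).mem i

theorem notMem_scheme_cons (hs : Dense s) (hab : a < b) {l : List ℤ} {n : ℕ} (hl : l.length = n)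
    (hn : f n ∈ s) (i : ℤ) : f n ∉ scheme s f a b (i :: l) :=
  hl ▸ notMem_Ioo_subdivision hs (ends_fst_lt_snd hs hab l) (hl ▸ hn) i

theorem disjoint_iInter_scheme (hs : Dense s) (hab : a < b) (hf : s ⊆ range f) (x : ℕ → ℤ) :
    Disjoint (⋂ n, scheme s f a b (res x n)) s := by
  refine disjoint_right.2 fun y hy hyx => ?_
  obtain ⟨n, rfl⟩ := hf hy
  have hn := mem_iInter.1 hyx (n + 1)
  rw [res_succ] at hn
  exact notMem_scheme_cons hs hab (res_length x n) hy (x n) hn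

theorem vanishingDiam_scheme (hs : Dense s) (hab : a < b) (hf : s ⊆ range f) :
    CantorScheme.VanishingDiam (scheme s f a b) := fun x => by
  have hlim := hs.tendsto_sub_of_nested (l := fun n => (ends s f a b (res x n)).1)
    (r := fun n => (ends s f a b (res x n)).2)
    (monotone_nat_of_le_succ fun n => by
      simpa only [res_succ] using (ends_cons_mem hs hab (x n) (res x n)).1.1.le)
    (antitone_nat_of_succ_le fun n => by
      simpa only [res_succ] using (ends_cons_mem hs hab (x n) (res x n)).2.2.le)
    (fun n => (ends_fst_lt_snd hs hab _).le) (disjoint_iInter_scheme hs hab hf x)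
  simpa only [scheme, Real.ediam_Ioo, ENNReal.ofReal_zero] using ENNReal.tendsto_ofReal hlim

theorem nonempty_homeomorph_Ioo_diff (hs : Dense s) (hf : s ⊆ range f) (hab : a < b) :
    Nonempty ((ℕ → ℤ) ≃ₜ ↥(Ioo a b \ s)) :=
  CantorScheme.nonempty_homeomorph_diff (closureAntitone_scheme hs hab) (disjoint_scheme hs hab)
    (vanishingDiam_scheme hs hab hf) (fun l => nonempty_Ioo.2 (ends_fst_lt_snd hs hab l))
    (fun _ => isOpen_Ioo) (diff_subset_iUnion_scheme hs hab) (disjoint_iInter_scheme hs hab hf)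

end IntervalScheme

open IntervalScheme in
/-- If `D ⊆ ℝ` is countable and dense and `(a,b)` is a nonempty open interval, then
`(a,b) \ D` is homeomorphic to the Baire space `ω^ω`. -/
theorem interval_diff_countable_dense_homeo_baire (D : Set ℝ)
    (hDc : D.Countable) (hDd : Dense D) (a b : ℝ) (hab : a < b) :
    Nonempty (↥(Set.Ioo a b \ D) ≃ₜ (ℕ → ℕ)) := by
  obtain ⟨f, rfl⟩ := hDc.exists_eq_range hDd.nonempty
  obtain ⟨e⟩ := nonempty_homeomorph_Ioo_diff hDd subset_rfl hab
  exact ⟨e.symm.trans (Homeomorph.piCongrRight fun _ => Equiv.intEquivNat.toHomeomorphOfDiscrete)⟩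
end
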